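/- For every integer N ≥ 3, every β > 0 and every δ ∈ ℝ, if θ = −δ (so that x = 0), then E_r(θ) = E_p(θ) = N²·θ·H_N; in particular this value does not depend on β. -/

import Mathlib

open Real Finset Filter Topology Matrix

/-- Transition matrix `U` between the transient states of the absorbing Markov chain,
for population size `N`, selection intensity `β`, payoff difference `δ` and incentive `θ`.
The index `i : Fin (N-1)` corresponds to the state with `i+1` cooperators;
`x = β(θ+δ)` and `p_i = i(N-i)/N²`. -/
noncomputable def Umat (N : ℕ) (β δ θ : ℝ) : Matrix (Fin (N - 1)) (Fin (N - 1)) ℝ :=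
  fun i j =>
    let x : ℝ := β * (θ + δ)
    let p : ℝ := ((i : ℕ) + 1 : ℝ) * ((N : ℝ) - ((i : ℕ) + 1 : ℝ)) / (N : ℝ) ^ 2
    if (j : ℕ) = (i : ℕ) + 1 then p / (1 + Real.exp (-x))
    else if (j : ℕ) + 1 = (i : ℕ) then p / (1 + Real.exp x)
    else if j = i then 1 - p / (1 + Real.exp (-x)) - p / (1 + Real.exp x)
    else 0

/-- The fundamental matrix `𝒩 = (I - U)⁻¹` of the absorbing Markov chain. -/
noncomputable def fund (N : ℕ) (β δ θ : ℝ) : Matrix (Fin (N - 1)) (Fin (N - 1)) ℝ :=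
  (1 - Umat N β δ θ)⁻¹

/-- Expected total cost of institutional reward,
`E_r(θ) = (θ/2) Σ_{i=1}^{N-1} (n_{1,i} + n_{N-1,i}) · i`
(row `1` is index `0` and row `N-1` is index `N-2`; junk value `0` for `N < 3`). -/
noncomputable def Ereward (N : ℕ) (β δ θ : ℝ) : ℝ :=
  if h : 3 ≤ N then
    (θ / 2) * ∑ j : Fin (N - 1),
      (fund N β δ θ ⟨0, by omega⟩ j + fund N β δ θ ⟨N - 2, by omega⟩ j) * ((j : ℕ) + 1 : ℝ)
  else 0

/-- Expected total cost of institutional punishment,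
`E_p(θ) = (θ/2) Σ_{i=1}^{N-1} (n_{1,i} + n_{N-1,i}) · (N - i)`. -/
noncomputable def Epunish (N : ℕ) (β δ θ : ℝ) : ℝ :=
  if h : 3 ≤ N then
    (θ / 2) * ∑ j : Fin (N - 1),
      (fund N β δ θ ⟨0, by omega⟩ j + fund N β δ θ ⟨N - 2, by omega⟩ j)
        * ((N : ℝ) - ((j : ℕ) + 1 : ℝ))
  else 0

/-- Harmonic number `H_N = Σ_{j=1}^{N-1} 1/j`. -/
noncomputable def harmonicNum (N : ℕ) : ℝ := ∑ j ∈ Finset.range (N - 1), (1 : ℝ) / ((j : ℕ) + 1)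

/-! At `x = 0` the chain is the symmetric birth–death walk: `I - U = diag(p) · (I - (S + Sᵀ)/2)`
with `S` the shift. The tridiagonal factor is the Dirichlet Laplacian on `{1, …, N-1}`, whose
inverse is the Green function `G(s, t) = 2 min(s, t) (N - max(s, t)) / N`; hence
`n_{s,t} = G(s, t) / p_t`. Since `G(1, t) + G(N-1, t) = 2`, the two boundary rows add up to
`n_{1,t} + n_{N-1,t} = 2N² / (t (N - t))`, and weighting by `t` or by `N - t` leaves
`2N² Σ 1/(N - t)` resp. `2N² Σ 1/t`, both `2N² H_N`. -/

noncomputable def green (N s t : ℕ) : ℝ := (min s t : ℕ) * ((N : ℝ) - (max s t : ℕ))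

lemma green_zero_left (N t : ℕ) : green N 0 t = 0 := by simp [green]

lemma green_self_left {N t : ℕ} (ht : t ≤ N) : green N N t = 0 := by
  simp [green, max_eq_left ht]

lemma green_second_diff (N s t : ℕ) :
    2 * green N (s + 1) t - green N s t - green N (s + 2) t = if s + 1 = t then (N : ℝ) else 0 := by
  rcases lt_trichotomy (s + 1) t with h | rfl | h
  · rw [if_neg h.ne, green, green, green, min_eq_left h.le, min_eq_left (by omega),
      min_eq_left (by omega : s + 2 ≤ t), max_eq_right h.le, max_eq_right (by omega),
      max_eq_right (by omega : s + 2 ≤ t)]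
    push_cast; ring
  · simp only [green, if_true, min_self, max_self, min_eq_left (Nat.le_succ s),
      min_eq_right (by omega : s + 1 ≤ s + 2), max_eq_right (Nat.le_succ s),
      max_eq_left (by omega : s + 1 ≤ s + 2)]
    push_cast; ring
  · rw [if_neg h.ne', green, green, green, min_eq_right h.le, min_eq_right (by omega),
      min_eq_right (by omega : t ≤ s + 2), max_eq_left h.le, max_eq_left (by omega),
      max_eq_left (by omega : t ≤ s + 2)]
    push_cast; ring

lemma green_one_add_green_pred {N t : ℕ} (ht : 1 ≤ t) (htN : t < N) :
    green N 1 t + green N (N - 1) t = N := by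
  rw [green, green, min_eq_left ht, max_eq_right ht, min_eq_right (by omega),
    max_eq_left (by omega), Nat.cast_sub (by omega)]
  push_cast; ring

lemma sum_fin_ite_succ_eq_mul {n m : ℕ} (hm : m ≤ n + 1) (x : ℝ) {f : ℕ → ℝ} (h0 : f 0 = 0)
    (hn : f (n + 1) = 0) :
    ∑ k : Fin n, (if (k : ℕ) + 1 = m then x else 0) * f (k + 1) = x * f m := by
  -- `f` vanishes at the boundary states `0` and `n + 1`, so the sum may run over all of `0, …, n + 1`.
  set φ : ℕ → ℝ := fun s => if s = m then x * f s else 0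
  calc ∑ k : Fin n, (if (k : ℕ) + 1 = m then x else 0) * f (k + 1)
      = ∑ k ∈ Finset.range n, φ (k + 1) := by
        rw [← Fin.sum_univ_eq_sum_range (fun k => φ (k + 1))]
        simp only [φ, ite_mul, zero_mul]
    _ = ∑ s ∈ Finset.range (n + 2), φ s := by
        rw [Finset.sum_range_succ, Finset.sum_range_succ']
        simp [φ, h0, hn]
    _ = x * f m := by simp [φ, Finset.sum_ite_eq', Nat.lt_succ_of_le hm]

noncomputable def mixedPairProb (N t : ℕ) : ℝ := t * ((N : ℝ) - t) / (N : ℝ) ^ 2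

lemma one_sub_Umat_neutral_apply (N : ℕ) (β δ : ℝ) (i k : Fin (N - 1)) :
    (1 - Umat N β δ (-δ)) i k =
      (if (k : ℕ) + 1 = i + 1 then mixedPairProb N (i + 1) else 0)
        + (if (k : ℕ) + 1 = i + 2 then -(mixedPairProb N (i + 1) / 2) else 0)
        + (if (k : ℕ) + 1 = i then -(mixedPairProb N (i + 1) / 2) else 0) := by
  have hx : β * (-δ + δ) = 0 := by ring
  simp only [Matrix.sub_apply, Matrix.one_apply, Umat, hx, neg_zero, Real.exp_zero,
    mixedPairProb, Fin.ext_iff]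
  push_cast
  split_ifs <;> first | (exfalso; omega) | ring

lemma sum_one_sub_Umat_neutral_mul {N : ℕ} (hN : 1 ≤ N) (β δ : ℝ) (i : Fin (N - 1))
    {f : ℕ → ℝ} (h0 : f 0 = 0) (hN0 : f N = 0) :
    ∑ k, (1 - Umat N β δ (-δ)) i k * f (k + 1)
      = mixedPairProb N (i + 1) / 2 * (2 * f (i + 1) - f i - f (i + 2)) := by
  have hf : f (N - 1 + 1) = 0 := by rwa [Nat.sub_add_cancel hN]
  have hi := i.isLt
  simp only [one_sub_Umat_neutral_apply, add_mul, Finset.sum_add_distrib,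
    sum_fin_ite_succ_eq_mul (by omega : (i : ℕ) + 1 ≤ N - 1 + 1) _ h0 hf,
    sum_fin_ite_succ_eq_mul (by omega : (i : ℕ) + 2 ≤ N - 1 + 1) _ h0 hf,
    sum_fin_ite_succ_eq_mul (by omega : (i : ℕ) ≤ N - 1 + 1) _ h0 hf]
  ring

lemma natCast_sub_val_succ_ne_zero {N : ℕ} (j : Fin (N - 1)) : (N : ℝ) - ((j : ℕ) + 1) ≠ 0 :=
  sub_ne_zero.mpr (by exact_mod_cast (by omega : (j : ℕ) + 1 < N).ne')

lemma mixedPairProb_pos {N t : ℕ} (ht : 0 < t) (htN : t < N) : 0 < mixedPairProb N t := by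
  have htN' : (0 : ℝ) < N - t := sub_pos.mpr (by exact_mod_cast htN)
  have ht' : (0 : ℝ) < t := by exact_mod_cast ht
  exact div_pos (mul_pos ht' htN') (pow_pos (by linarith) 2)

noncomputable def fundNeutral (N : ℕ) : Matrix (Fin (N - 1)) (Fin (N - 1)) ℝ :=
  fun i j => 2 * green N (i + 1) (j + 1) / (N * mixedPairProb N (j + 1))

lemma one_sub_Umat_neutral_mul_fundNeutral {N : ℕ} (hN : 1 ≤ N) (β δ : ℝ) :
    (1 - Umat N β δ (-δ)) * fundNeutral N = 1 := by
  ext i j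
  have hp := mixedPairProb_pos (N := N) (t := j + 1) (by omega) (by omega)
  have hN' : (N : ℝ) ≠ 0 := by positivity
  have hsum := sum_one_sub_Umat_neutral_mul hN β δ i
    (f := fun s => 2 * green N s (j + 1) / (N * mixedPairProb N (j + 1)))
    (by simp [green_zero_left]) (by simp [green_self_left (by omega : (j : ℕ) + 1 ≤ N)])
  rw [Matrix.mul_apply]
  refine hsum.trans ?_
  have hdiff := green_second_diff N i (j + 1)
  rw [Matrix.one_apply]
  by_cases hij : i = j
  · subst hij
    rw [if_pos rfl] at hdiff ⊢
    field_simp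
    linear_combination hdiff
  · rw [if_neg (fun h => hij (Fin.ext (by omega))), sub_sub] at hdiff
    rw [if_neg hij]
    field_simp
    linear_combination mixedPairProb N (i + 1) * hdiff

lemma fund_neutral {N : ℕ} (hN : 1 ≤ N) (β δ : ℝ) : fund N β δ (-δ) = fundNeutral N :=
  Matrix.inv_eq_right_inv (one_sub_Umat_neutral_mul_fundNeutral hN β δ)

lemma fund_neutral_first_add_last {N : ℕ} (hN : 3 ≤ N) (β δ : ℝ) (j : Fin (N - 1)) :
    fund N β δ (-δ) ⟨0, by omega⟩ j + fund N β δ (-δ) ⟨N - 2, by omega⟩ j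
      = 2 * (N : ℝ) ^ 2 / (((j : ℕ) + 1) * ((N : ℝ) - ((j : ℕ) + 1))) := by
  have hj : (j : ℕ) + 1 < N := by omega
  have hjN := natCast_sub_val_succ_ne_zero j
  rw [fund_neutral (by omega)]
  show 2 * green N (0 + 1) (j + 1) / _ + 2 * green N (N - 2 + 1) (j + 1) / _ = _
  rw [← add_div, ← mul_add, show N - 2 + 1 = N - 1 by omega,
    green_one_add_green_pred (by omega) hj, mixedPairProb]
  push_cast
  field_simp

lemma sum_one_div_succ_eq_harmonicNum (N : ℕ) :
    ∑ j : Fin (N - 1), 1 / (((j : ℕ) : ℝ) + 1) = harmonicNum N :=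
  Fin.sum_univ_eq_sum_range (fun j => 1 / ((j : ℝ) + 1)) (N - 1)

lemma sum_one_div_sub_succ_eq_harmonicNum {N : ℕ} (hN : 1 ≤ N) :
    ∑ j : Fin (N - 1), 1 / ((N : ℝ) - ((j : ℕ) + 1)) = harmonicNum N := by
  rw [← sum_one_div_succ_eq_harmonicNum, ← Equiv.sum_comp Fin.revPerm]
  refine Finset.sum_congr rfl fun j _ => ?_
  rw [Fin.revPerm_apply, Fin.val_rev, Nat.cast_sub (by omega), Nat.cast_sub hN]
  push_cast
  ring_nf

theorem cost_at_neutral_incentive_general (N : ℕ) (hN : 3 ≤ N) (β δ θ : ℝ)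
    (hθ : θ = -δ) :
    Ereward N β δ θ = (N : ℝ) ^ 2 * θ * harmonicNum N ∧
    Epunish N β δ θ = (N : ℝ) ^ 2 * θ * harmonicNum N := by
  subst hθ
  have hreward (j : Fin (N - 1)) :
      2 * (N : ℝ) ^ 2 / (((j : ℕ) + 1) * ((N : ℝ) - ((j : ℕ) + 1))) * ((j : ℕ) + 1)
        = 2 * (N : ℝ) ^ 2 * (1 / ((N : ℝ) - ((j : ℕ) + 1))) := by
    field_simp [natCast_sub_val_succ_ne_zero j]
  have hpunish (j : Fin (N - 1)) :
      2 * (N : ℝ) ^ 2 / (((j : ℕ) + 1) * ((N : ℝ) - ((j : ℕ) + 1))) * ((N : ℝ) - ((j : ℕ) + 1))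
        = 2 * (N : ℝ) ^ 2 * (1 / (((j : ℕ) : ℝ) + 1)) := by
    field_simp [natCast_sub_val_succ_ne_zero j]
  rw [Ereward, Epunish, dif_pos hN, dif_pos hN]
  simp only [fund_neutral_first_add_last hN, hreward, hpunish, ← Finset.mul_sum,
    sum_one_div_succ_eq_harmonicNum, sum_one_div_sub_succ_eq_harmonicNum (by omega : 1 ≤ N)]
  constructor <;> ring

/-- For every N ≥ 3, β > 0 and δ ∈ ℝ, if θ = −δ (so that x = 0) then
E_r(θ) = E_p(θ) = N²·θ·H_N; in particular this value does not depend on β. -/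
theorem cost_at_neutral_incentive (N : ℕ) (hN : 3 ≤ N) (β δ θ : ℝ) (hβ : 0 < β)
    (hθ : θ = -δ) :
    Ereward N β δ θ = (N : ℝ) ^ 2 * θ * harmonicNum N ∧
    Epunish N β δ θ = (N : ℝ) ^ 2 * θ * harmonicNum N :=
  cost_at_neutral_incentive_general N hN β δ θ hθ
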